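/- arXiv:2210.02051 — 4 statements merged into one kernel-verified Lean document; each statement's English description precedes it below -/
import Mathlib

section
/- For all real numbers a and b, f(b)·(b − a) ≥ F(b) − F(a) + (1/4)·(b² − a²)² − (1/2)·(b − a)². (This is the pointwise form of the key one-sided energy estimate (tfe1) used in the discrete energy analysis.) -/
/-- The Allen–Cahn nonlinearity `f(x) = x³ − x`. -/
noncomputable def acF (x : ℝ) : ℝ := x ^ 3 - x

/-- The double-well potential `F(x) = (1/4)(x² − 1)²`. -/
noncomputable def acPot (x : ℝ) : ℝ := (1 / 4) * (x ^ 2 - 1) ^ 2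

/-- Pointwise one-sided energy estimate (tfe1):
`f(b)·(b − a) ≥ F(b) − F(a) + (1/4)(b² − a²)² − (1/2)(b − a)²`. -/
theorem stmt0 (a b : ℝ) :
    acF b * (b - a) ≥
      acPot b - acPot a + (1 / 4) * (b ^ 2 - a ^ 2) ^ 2 - (1 / 2) * (b - a) ^ 2 := by
  unfold acF acPot
  nlinarith [sq_nonneg (b - a), sq_nonneg (b + a), sq_nonneg ((b-a)*(b+a)), sq_nonneg (b^2 - a^2), sq_nonneg (b*(b-a))]
end

section
/- Let (X, μ) be a measure space with μ finite, and let u, v : X → ℝ be measurable functions belonging to L⁴(μ). Then ∫ f(u)·(u − v) dμ ≥ ∫ F(u) dμ − ∫ F(v) dμ + (1/4)·∫ (u² − v²)² dμ − (1/2)·∫ (u − v)² dμ. (This is the integrated one-sided energy estimate (tfe1), with L⁴-membership guaranteeing that every integral is finite.) -/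
/-!
Pointwise, `f(a)(a − b)` exceeds the right-hand side by exactly `(1/2)(a(a − b))²`: this is the
fourth-order Taylor expansion of `F` at `a`. Integrating gives the estimate, and every integrand is a
polynomial of degree at most four in `u` and `v`, hence integrable by Hölder's inequality.
-/

open MeasureTheory

theorem acF_mul_sub_eq (a b : ℝ) :
    acF a * (a - b) = acPot a - acPot b + 1 / 4 * (a ^ 2 - b ^ 2) ^ 2 - 1 / 2 * (a - b) ^ 2
      + 1 / 2 * (a * (a - b)) ^ 2 := by
  simp only [acF, acPot]
  ring

theorem acPot_sub_add_le_acF_mul_sub (a b : ℝ) :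
    acPot a - acPot b + 1 / 4 * (a ^ 2 - b ^ 2) ^ 2 - 1 / 2 * (a - b) ^ 2 ≤ acF a * (a - b) := by
  rw [acF_mul_sub_eq]
  exact le_add_of_nonneg_right (by positivity)

instance ENNReal.holderTriple_four_four_two : ENNReal.HolderTriple 4 4 2 where
  inv_add_inv_eq_inv := by
    rw [show (4 : ENNReal) = 2 * 2 by norm_num, ENNReal.mul_inv (by simp) (by simp), ← two_mul,
      ← mul_assoc, ENNReal.mul_inv_cancel (by simp) (by simp), one_mul]

namespace MeasureTheory

variable {X : Type*} [MeasurableSpace X] {μ : Measure X} {u w : X → ℝ}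

theorem MemLp.mul_of_four (hu : MemLp u 4 μ) (hw : MemLp w 4 μ) :
    MemLp (fun x => u x * w x) 2 μ :=
  hw.mul' hu

theorem MemLp.sq_of_four (hu : MemLp u 4 μ) : MemLp (fun x => u x ^ 2) 2 μ := by
  simpa only [sq] using hu.mul_of_four hu

variable [IsFiniteMeasure μ]

theorem MemLp.sq_sub_one_of_four (hu : MemLp u 4 μ) : MemLp (fun x => u x ^ 2 - 1) 2 μ :=
  hu.sq_of_four.sub (memLp_const 1)

theorem integrable_acPot_comp (hu : MemLp u 4 μ) : Integrable (fun x => acPot (u x)) μ :=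
  hu.sq_sub_one_of_four.integrable_sq.const_mul (1 / 4)

theorem integrable_acF_comp_mul (hu : MemLp u 4 μ) (hw : MemLp w 4 μ) :
    Integrable (fun x => acF (u x) * w x) μ := by
  have h : Integrable (fun x => (u x ^ 2 - 1) * (u x * w x)) μ :=
    hu.sq_sub_one_of_four.integrable_mul (hu.mul_of_four hw)
  refine h.congr (.of_forall fun x => ?_)
  simp only [acF]
  ring

end MeasureTheory

theorem stmt2_general {X : Type*} [MeasurableSpace X] (μ : Measure X) [IsFiniteMeasure μ]
    (u v : X → ℝ)
    (hu4 : MemLp u 4 μ) (hv4 : MemLp v 4 μ) :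
    ∫ x, acF (u x) * (u x - v x) ∂μ ≥
      ∫ x, acPot (u x) ∂μ - ∫ x, acPot (v x) ∂μ
        + (1 / 4) * ∫ x, ((u x) ^ 2 - (v x) ^ 2) ^ 2 ∂μ
        - (1 / 2) * ∫ x, (u x - v x) ^ 2 ∂μ := by
  have hFu := integrable_acPot_comp hu4
  have hFv := integrable_acPot_comp hv4
  have hsq : Integrable (fun x => 1 / 4 * (u x ^ 2 - v x ^ 2) ^ 2) μ :=
    (hu4.sq_of_four.sub hv4.sq_of_four).integrable_sq.const_mul _
  have hdiff : Integrable (fun x => 1 / 2 * (u x - v x) ^ 2) μ :=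
    ((hu4.sub hv4).mono_exponent (by norm_num)).integrable_sq.const_mul _
  have hpot : Integrable (fun x => acPot (u x) - acPot (v x)) μ := hFu.sub hFv
  have hpotsq :
      Integrable (fun x => acPot (u x) - acPot (v x) + 1 / 4 * (u x ^ 2 - v x ^ 2) ^ 2) μ :=
    hpot.add hsq
  have hmono : ∫ x, acPot (u x) - acPot (v x) + 1 / 4 * (u x ^ 2 - v x ^ 2) ^ 2
      - 1 / 2 * (u x - v x) ^ 2 ∂μ ≤ ∫ x, acF (u x) * (u x - v x) ∂μ :=
    integral_mono (hpotsq.sub hdiff) (integrable_acF_comp_mul hu4 (hu4.sub hv4))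
      fun x => acPot_sub_add_le_acF_mul_sub (u x) (v x)
  rwa [integral_sub hpotsq hdiff, integral_add hpot hsq, integral_sub hFu hFv,
    integral_const_mul, integral_const_mul] at hmono

/-- Integrated one-sided energy estimate (tfe1): if `u, v ∈ L⁴(μ)` with `μ` finite, then
`∫ f(u)(u − v) dμ ≥ ∫ F(u) dμ − ∫ F(v) dμ + (1/4)∫ (u² − v²)² dμ − (1/2)∫ (u − v)² dμ`. -/
theorem stmt2 {X : Type*} [MeasurableSpace X] (μ : Measure X) [IsFiniteMeasure μ]
    (u v : X → ℝ) (hu : Measurable u) (hv : Measurable v)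
    (hu4 : MemLp u 4 μ) (hv4 : MemLp v 4 μ) :
    ∫ x, acF (u x) * (u x - v x) ∂μ ≥
      ∫ x, acPot (u x) ∂μ - ∫ x, acPot (v x) ∂μ
        + (1 / 4) * ∫ x, ((u x) ^ 2 - (v x) ^ 2) ^ 2 ∂μ
        - (1 / 2) * ∫ x, (u x - v x) ^ 2 ∂μ :=
  stmt2_general μ u v hu4 hv4
end

section
/- Let 0 < τ < 1/2 and let T : ℝ → ℝ satisfy T(g) + τ·f(T(g)) = g for every g ∈ ℝ. Then T is twice differentiable and for every g ∈ ℝ one has T''(g) = −6·τ·T(g)·(T'(g))³; consequently |T''(g)| ≤ 96·τ·|g|. (This is the scalar analogue of the second-derivative formula D²T_τ(g) = −τ·(DT_τ(g))²·f''(T_τ(g))·DT_τ(g) and the bound (eq:D2T) ‖D²T_τ(g)‖ ≤ cτ(1 + ‖g‖).) -/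
/-!
`T` is the inverse of `φ(v) = v + τ f(v)`, whose derivative `1 − τ + 3τv²` is at least `1/2`
for `0 ≤ τ ≤ 1/2`. The inverse function theorem gives `T' = 1 / φ'(T)`, and differentiating
once more gives `T'' = −6τ T (T')³`. Finally `|T'| ≤ 2`, and `g = T(g) (1 − τ + τ T(g)²)` gives
`|T(g)| ≤ 2|g|`, so `|T''(g)| ≤ 6τ · 2|g| · 2³`.
-/

section InverseFunction

variable {φ T : ℝ → ℝ}

theorem continuous_of_strictMono_comp_eq_id (hφ : StrictMono φ) (hT : ∀ g, φ (T g) = g) :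
    Continuous T := by
  have hmono : Monotone T := fun a b hab => hφ.le_iff_le.mp (by rwa [hT, hT])
  exact hmono.continuous_of_surjective fun v => ⟨φ v, hφ.injective (hT (φ v))⟩

theorem hasDerivAt_of_strictMono_comp_eq_id {φ' : ℝ → ℝ} (hφ : StrictMono φ)
    (hφ' : ∀ v, HasDerivAt φ (φ' v) v) (hφ'0 : ∀ v, φ' v ≠ 0) (hT : ∀ g, φ (T g) = g)
    (g : ℝ) : HasDerivAt T (φ' (T g))⁻¹ g :=
  HasDerivAt.of_local_left_inverse (continuous_of_strictMono_comp_eq_id hφ hT).continuousAt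
    (hφ' (T g)) (hφ'0 (T g)) (Filter.Eventually.of_forall hT)

end InverseFunction

section AllenCahnStep

variable {τ : ℝ}

theorem hasDerivAt_add_mul_acF (τ v : ℝ) :
    HasDerivAt (fun v => v + τ * acF v) (1 - τ + 3 * τ * v ^ 2) v := by
  have h := (hasDerivAt_id' v).add (((hasDerivAt_pow 3 v).sub (hasDerivAt_id' v)).const_mul τ)
  exact h.congr_deriv (by norm_num; ring)

theorem one_half_le_add_mul_acF_deriv (hτ0 : 0 ≤ τ) (hτ : τ ≤ 1 / 2) (v : ℝ) :
    1 / 2 ≤ 1 - τ + 3 * τ * v ^ 2 := by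
  nlinarith [mul_nonneg hτ0 (sq_nonneg v)]

theorem strictMono_add_mul_acF (hτ0 : 0 ≤ τ) (hτ : τ ≤ 1 / 2) :
    StrictMono fun v => v + τ * acF v :=
  strictMono_of_hasDerivAt_pos (hasDerivAt_add_mul_acF τ) fun v => by
    linarith [one_half_le_add_mul_acF_deriv hτ0 hτ v]

theorem abs_le_two_mul_abs_add_mul_acF (hτ0 : 0 ≤ τ) (hτ : τ ≤ 1 / 2) (v : ℝ) :
    |v| ≤ 2 * |v + τ * acF v| := by
  have hfactor : v + τ * acF v = v * (1 - τ + τ * v ^ 2) := by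
    unfold acF
    ring
  have hlow : 1 / 2 ≤ 1 - τ + τ * v ^ 2 := by nlinarith [mul_nonneg hτ0 (sq_nonneg v)]
  rw [hfactor, abs_mul, abs_of_pos (a := 1 - τ + τ * v ^ 2) (by linarith)]
  nlinarith [abs_nonneg v]

variable {T : ℝ → ℝ}

theorem hasDerivAt_acResolvent (hτ0 : 0 ≤ τ) (hτ : τ ≤ 1 / 2)
    (hT : ∀ g, T g + τ * acF (T g) = g) (g : ℝ) :
    HasDerivAt T (1 - τ + 3 * τ * T g ^ 2)⁻¹ g :=
  hasDerivAt_of_strictMono_comp_eq_id (strictMono_add_mul_acF hτ0 hτ)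
    (hasDerivAt_add_mul_acF τ)
    (fun v => by linarith [one_half_le_add_mul_acF_deriv hτ0 hτ v]) hT g

theorem deriv_acResolvent (hτ0 : 0 ≤ τ) (hτ : τ ≤ 1 / 2)
    (hT : ∀ g, T g + τ * acF (T g) = g) :
    deriv T = fun g => (1 - τ + 3 * τ * T g ^ 2)⁻¹ :=
  funext fun g => (hasDerivAt_acResolvent hτ0 hτ hT g).deriv

theorem abs_deriv_acResolvent_le_two (hτ0 : 0 ≤ τ) (hτ : τ ≤ 1 / 2)
    (hT : ∀ g, T g + τ * acF (T g) = g) (g : ℝ) : |deriv T g| ≤ 2 := by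
  have hlow := one_half_le_add_mul_acF_deriv hτ0 hτ (T g)
  rw [deriv_acResolvent hτ0 hτ hT, abs_of_pos (inv_pos.2 (by linarith)),
    inv_le_comm₀ (by linarith) two_pos]
  linarith

theorem hasDerivAt_deriv_acResolvent (hτ0 : 0 ≤ τ) (hτ : τ ≤ 1 / 2)
    (hT : ∀ g, T g + τ * acF (T g) = g) (g : ℝ) :
    HasDerivAt (deriv T) (-6 * τ * T g * deriv T g ^ 3) g := by
  have hT' := hasDerivAt_acResolvent hτ0 hτ hT g
  have hne : 1 - τ + 3 * τ * T g ^ 2 ≠ 0 := by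
    linarith [one_half_le_add_mul_acF_deriv hτ0 hτ (T g)]
  have hden : HasDerivAt (fun x => 1 - τ + 3 * τ * T x ^ 2)
      (6 * τ * T g * (1 - τ + 3 * τ * T g ^ 2)⁻¹) g :=
    (((hT'.pow 2).const_mul (3 * τ)).const_add (1 - τ)).congr_deriv (by push_cast; ring)
  rw [deriv_acResolvent hτ0 hτ hT]
  refine (hden.inv hne).congr_deriv ?_
  field_simp

end AllenCahnStep

/-- Scalar analogue of the second-derivative formula for `D²T_τ` and the bound (eq:D2T):
if `0 < τ < 1/2` and `T(g) + τ f(T(g)) = g` for all `g`, then `T` is twice differentiable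
with `T''(g) = −6τ T(g) (T'(g))³` and `|T''(g)| ≤ 96 τ |g|`. -/
theorem stmt13 (τ : ℝ) (hτ0 : 0 < τ) (hτ : τ < 1 / 2) (T : ℝ → ℝ)
    (hT : ∀ g : ℝ, T g + τ * acF (T g) = g) :
    Differentiable ℝ T ∧ Differentiable ℝ (deriv T) ∧
      ∀ g : ℝ, deriv (deriv T) g = -6 * τ * T g * (deriv T g) ^ 3 ∧
        |deriv (deriv T) g| ≤ 96 * τ * |g| := by
  have hτ0' := hτ0.le
  have hτ' := hτ.le
  refine ⟨fun g => (hasDerivAt_acResolvent hτ0' hτ' hT g).differentiableAt,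
    fun g => (hasDerivAt_deriv_acResolvent hτ0' hτ' hT g).differentiableAt, fun g => ?_⟩
  have hformula := (hasDerivAt_deriv_acResolvent hτ0' hτ' hT g).deriv
  refine ⟨hformula, ?_⟩
  have hTg : |T g| ≤ 2 * |g| := by
    simpa only [hT] using abs_le_two_mul_abs_add_mul_acF hτ0' hτ' (T g)
  have hT'g : |deriv T g| ^ 3 ≤ 2 ^ 3 :=
    pow_le_pow_left₀ (abs_nonneg _) (abs_deriv_acResolvent_le_two hτ0' hτ' hT g) 3
  calc |deriv (deriv T) g| = 6 * τ * |T g| * |deriv T g| ^ 3 := by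
        rw [hformula, abs_mul, abs_mul, abs_mul, abs_pow, abs_neg, abs_of_pos hτ0]
        norm_num
    _ ≤ 6 * τ * (2 * |g|) * 2 ^ 3 := by gcongr
    _ = 96 * τ * |g| := by ring
end

section
/- Let (X, μ) be a measure space, let 0 < τ < 1/2, let p ∈ [1, ∞], and let v, g : X → ℝ be measurable functions such that v(x) + τ·f(v(x)) = g(x) for μ-almost every x. If g ∈ Lᵖ(μ) then v ∈ Lᵖ(μ) and ‖v‖_{Lᵖ(μ)} ≤ (1 − τ)⁻¹·‖g‖_{Lᵖ(μ)}. (This captures the Lᵖ-stability of the nonlinear resolvent asserted in estimate (est:TL2), in the zero-diffusion case.) -/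
open MeasureTheory ENNReal

lemma one_sub_mul_abs_le_abs_add_mul_acF {τ : ℝ} (hτ : 0 ≤ τ) (v : ℝ) :
    (1 - τ) * |v| ≤ |v + τ * acF v| := by
  have hfactor : v + τ * acF v = v * (1 - τ + τ * v ^ 2) := by unfold acF; ring
  have hcoeff : 1 - τ ≤ |1 - τ + τ * v ^ 2| :=
    (le_add_of_nonneg_right (by positivity)).trans (le_abs_self _)
  rw [hfactor, abs_mul, mul_comm]
  exact mul_le_mul_of_nonneg_left hcoeff (abs_nonneg v)

lemma norm_le_inv_one_sub_mul_norm_add_mul_acF {τ : ℝ} (hτ0 : 0 ≤ τ) (hτ1 : τ < 1) (v : ℝ) :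
    ‖v‖ ≤ (1 - τ)⁻¹ * ‖v + τ * acF v‖ := by
  rw [Real.norm_eq_abs, Real.norm_eq_abs, inv_mul_eq_div, le_div_iff₀ (sub_pos.2 hτ1), mul_comm]
  exact one_sub_mul_abs_le_abs_add_mul_acF hτ0 v

theorem stmt14_general {X : Type*} [MeasurableSpace X] (μ : Measure X)
    (τ : ℝ) (hτ0 : 0 < τ) (hτ : τ < 1 / 2)
    (p : ℝ≥0∞)
    (v g : X → ℝ) (hv : Measurable v)
    (heq : ∀ᵐ x ∂μ, v x + τ * acF (v x) = g x)
    (hgLp : MemLp g p μ) :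
    MemLp v p μ ∧ eLpNorm v p μ ≤ ENNReal.ofReal (1 - τ)⁻¹ * eLpNorm g p μ := by
  have hpointwise : ∀ᵐ x ∂μ, ‖v x‖ ≤ (1 - τ)⁻¹ * ‖g x‖ := by
    filter_upwards [heq] with x hx
    rw [← hx]
    exact norm_le_inv_one_sub_mul_norm_add_mul_acF hτ0.le (by linarith) (v x)
  exact ⟨hgLp.of_le_mul hv.aestronglyMeasurable hpointwise,
    eLpNorm_le_mul_eLpNorm_of_ae_le_mul hpointwise p⟩

/-- `Lᵖ`-stability of the (zero-diffusion) nonlinear resolvent, cf. (est:TL2):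
if `0 < τ < 1/2`, `1 ≤ p ≤ ∞`, `v + τ f(v) = g` a.e., and `g ∈ Lᵖ(μ)`, then
`v ∈ Lᵖ(μ)` with `‖v‖_{Lᵖ} ≤ (1 − τ)⁻¹ ‖g‖_{Lᵖ}`. -/
theorem stmt14 {X : Type*} [MeasurableSpace X] (μ : Measure X)
    (τ : ℝ) (hτ0 : 0 < τ) (hτ : τ < 1 / 2)
    (p : ℝ≥0∞) (hp : 1 ≤ p)
    (v g : X → ℝ) (hv : Measurable v) (hg : Measurable g)
    (heq : ∀ᵐ x ∂μ, v x + τ * acF (v x) = g x)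
    (hgLp : MemLp g p μ) :
    MemLp v p μ ∧ eLpNorm v p μ ≤ ENNReal.ofReal (1 - τ)⁻¹ * eLpNorm g p μ :=
  stmt14_general μ τ hτ0 hτ p v g hv heq hgLp
end
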